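/- arXiv:2102.09626 — 3 statements merged into one kernel-verified Lean document; each statement's English description precedes it below -/
import Mathlib

section
/- Let θ̂ be any minimizer over ℝ^p of θ ↦ L(θ) + λR(θ), where L : ℝ^p → ℝ is convex and differentiable, λ > 0, and R is a norm decomposable with respect to a subspace pair (M, M̄^⊥) with M ⊆ M̄. Let φ be the subspace compatibility constant of the pair (‖·‖, R) on M̄ (assumed finite), let α > 0 and Z ≥ 0, and fix θ* ∈ ℝ^p. Assume (i) λ ≥ 2R*(∇L(θ*)), and (ii) B(θ, θ*) ≥ α‖θ − θ*‖² − Z for every θ ∈ ℝ^p with θ − θ* ∈ ℂ. Then ‖θ̂ − θ*‖² ≤ 9(λ²/α²)φ² + (1/α)(2Z + 4λ·R(θ*_{M^⊥})). -/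
/-! Put Δ = θ̂ − θ*. Minimality of θ̂ against θ* bounds L(θ̂) − L(θ*) above by λ(R(θ*) − R(θ̂)), while
convexity of L and λ ≥ 2R*(∇L(θ*)) bound it below by ⟨∇L(θ*), Δ⟩ ≥ −(λ/2)R(Δ). Decomposability gives
R(θ*) − R(θ̂) ≤ R(Δ_M̄) + 2R(θ*_M⊥) − R(Δ_M̄⊥), so Δ lies in ℂ and
B(θ̂, θ*) ≤ (3λ/2)R(Δ_M̄) + 2λR(θ*_M⊥). Restricted strong convexity and R(Δ_M̄) ≤ φ‖Δ‖ then give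
α‖Δ‖² ≤ (3λφ/2)‖Δ‖ + 2λR(θ*_M⊥) + Z, a quadratic inequality in ‖Δ‖ solved by AM–GM. -/

noncomputable section
open scoped RealInnerProductSpace

/-- Orthogonal projection of `θ` onto the subspace `N` of Euclidean space,
viewed as an element of the ambient space. -/
def proj {p : ℕ} (N : Submodule ℝ (EuclideanSpace ℝ (Fin p)))
    (θ : EuclideanSpace ℝ (Fin p)) : EuclideanSpace ℝ (Fin p) :=
  (Submodule.orthogonalProjectionOnto N θ : EuclideanSpace ℝ (Fin p))

/-- Dual norm `R*(u) = sup { ⟨u, v⟩ : R(v) ≤ 1 }`. -/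
def dualNorm {p : ℕ} (R : EuclideanSpace ℝ (Fin p) → ℝ)
    (u : EuclideanSpace ℝ (Fin p)) : ℝ :=
  sSup ((fun v => ⟪u, v⟫) '' {v | R v ≤ 1})

section ConvexFirstOrder

variable {E : Type*} [NormedAddCommGroup E] [NormedSpace ℝ E]

theorem ConvexOn.add_fderiv_sub_le {s : Set E} {f : E → ℝ} {f' : E →L[ℝ] ℝ} {x y : E}
    (hf : ConvexOn ℝ s f) (hx : x ∈ s) (hy : y ∈ s) (hf' : HasFDerivAt f f' x) :
    f x + f' (y - x) ≤ f y := by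
  have hline := hf.comp_affineMap (AffineMap.lineMap (k := ℝ) x y)
  have hderiv : HasDerivAt (f ∘ AffineMap.lineMap (k := ℝ) x y) (f' (y - x)) 0 := by
    refine HasFDerivAt.comp_hasDerivAt (0 : ℝ) ?_ AffineMap.hasDerivAt_lineMap
    simpa using hf'
  have hslope := hline.le_slope_of_hasDerivAt (x := 0) (y := 1) (by simpa) (by simpa) one_pos hderiv
  simp only [slope_def_field, Function.comp_apply, AffineMap.lineMap_apply_zero,
    AffineMap.lineMap_apply_one, sub_zero, div_one] at hslope
  linarith

theorem ConvexOn.add_inner_sub_le_of_hasGradientAt {F : Type*} [NormedAddCommGroup F]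
    [InnerProductSpace ℝ F] [CompleteSpace F] {s : Set F} {f : F → ℝ} {g x y : F}
    (hf : ConvexOn ℝ s f) (hx : x ∈ s) (hy : y ∈ s) (hg : HasGradientAt f g x) :
    f x + ⟪g, y - x⟫ ≤ f y :=
  hf.add_fderiv_sub_le hx hy hg.hasFDerivAt

end ConvexFirstOrder

namespace Seminorm

variable {E : Type*} [NormedAddCommGroup E] [NormedSpace ℝ E]

theorem le_mul_norm_of_isLUB (R : Seminorm ℝ E) {S : Set E} {φ : ℝ}
    (hφ : IsLUB ((fun u => R u / ‖u‖) '' {u | u ∈ S ∧ u ≠ 0}) φ) {u : E} (hu : u ∈ S) :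
    R u ≤ φ * ‖u‖ := by
  rcases eq_or_ne u 0 with rfl | hu0
  · simp
  rw [← div_le_iff₀ (norm_pos_iff.2 hu0)]
  exact hφ.1 ⟨u, ⟨hu, hu0⟩, rfl⟩

theorem nonneg_of_isLUB (R : Seminorm ℝ E) {S : Set E} {φ : ℝ}
    (hφ : IsLUB ((fun u => R u / ‖u‖) '' {u | u ∈ S ∧ u ≠ 0}) φ) : 0 ≤ φ := by
  obtain ⟨_, u, hu, rfl⟩ := hφ.nonempty
  exact (div_nonneg (apply_nonneg R u) (norm_nonneg u)).trans (hφ.1 ⟨u, hu, rfl⟩)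

theorem exists_pos_mul_norm_le [FiniteDimensional ℝ E] (R : Seminorm ℝ E)
    (hR : ∀ u, R u = 0 → u = 0) : ∃ c > 0, ∀ v, c * ‖v‖ ≤ R v := by
  rcases subsingleton_or_nontrivial E with hE | hE
  · exact ⟨1, one_pos, fun v => by simp [Subsingleton.elim v 0]⟩
  obtain ⟨x₀, hx₀, hmin⟩ := (isCompact_sphere (0 : E) 1).exists_isMinOn
    (NormedSpace.sphere_nonempty.2 zero_le_one) R.convexOn.locallyLipschitz.continuous.continuousOn
  simp only [mem_sphere_iff_norm, sub_zero] at hx₀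
  have hpos : 0 < R x₀ := (apply_nonneg R x₀).lt_of_ne fun h =>
    by simp [hR x₀ h.symm] at hx₀
  refine ⟨R x₀, hpos, fun v => ?_⟩
  rcases eq_or_ne v 0 with rfl | hv
  · simp
  have hnv : 0 < ‖v‖ := norm_pos_iff.2 hv
  have hsphere : ‖v‖⁻¹ • v ∈ Metric.sphere (0 : E) 1 := by
    simp [norm_smul, hnv.ne']
  have hle : R x₀ ≤ R (‖v‖⁻¹ • v) := hmin hsphere
  rwa [map_smul_eq_mul, norm_inv, norm_norm, le_inv_mul_iff₀ hnv, mul_comm] at hle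

-- Without this, the `sSup` in `dualNorm` would be the junk value `0`.
theorem bddAbove_inner_image_le_one {F : Type*} [NormedAddCommGroup F] [InnerProductSpace ℝ F]
    [FiniteDimensional ℝ F] (R : Seminorm ℝ F) (hR : ∀ u, R u = 0 → u = 0) (u : F) :
    BddAbove ((fun v => ⟪u, v⟫) '' {v | R v ≤ 1}) := by
  obtain ⟨c, hc, hcR⟩ := R.exists_pos_mul_norm_le hR
  refine ⟨‖u‖ * (1 / c), ?_⟩
  rintro _ ⟨w, hw, rfl⟩
  have hw : ‖w‖ ≤ 1 / c := (le_div_iff₀' hc).2 ((hcR w).trans hw)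
  exact (real_inner_le_norm u w).trans (by gcongr)

end Seminorm

theorem sq_le_of_mul_sq_le_mul_add {a b c t : ℝ} (ha : 0 < a) (h : a * t ^ 2 ≤ b * t + c) :
    t ^ 2 ≤ b ^ 2 / a ^ 2 + 2 * c / a := by
  have hsq : a ^ 2 * t ^ 2 ≤ b ^ 2 + 2 * a * c := by
    nlinarith [sq_nonneg (a * t - b), mul_le_mul_of_nonneg_left h ha.le]
  have hrhs : b ^ 2 / a ^ 2 + 2 * c / a = (b ^ 2 + 2 * a * c) / a ^ 2 := by
    field_simp
  rw [hrhs, le_div_iff₀ (by positivity)]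
  linarith

section Regularizer

variable {p : ℕ}

theorem proj_add_proj_orthogonal (N : Submodule ℝ (EuclideanSpace ℝ (Fin p)))
    (x : EuclideanSpace ℝ (Fin p)) : proj N x + proj Nᗮ x = x :=
  N.starProjection_add_starProjection_orthogonal x

theorem proj_mem (N : Submodule ℝ (EuclideanSpace ℝ (Fin p))) (x : EuclideanSpace ℝ (Fin p)) :
    proj N x ∈ N :=
  (N.orthogonalProjectionOnto x).2

theorem norm_proj_le (N : Submodule ℝ (EuclideanSpace ℝ (Fin p))) (x : EuclideanSpace ℝ (Fin p)) :
    ‖proj N x‖ ≤ ‖x‖ :=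
  N.norm_starProjection_apply_le x

def IsDecomposable (R : EuclideanSpace ℝ (Fin p) → ℝ)
    (M Mbar : Submodule ℝ (EuclideanSpace ℝ (Fin p))) : Prop :=
  ∀ θ ∈ M, ∀ γ ∈ Mbarᗮ, R (θ + γ) = R θ + R γ

theorem IsDecomposable.sub_le_seminorm_add_sub (R : Seminorm ℝ (EuclideanSpace ℝ (Fin p)))
    {M Mbar : Submodule ℝ (EuclideanSpace ℝ (Fin p))} (hR : IsDecomposable R M Mbar)
    (θ Δ : EuclideanSpace ℝ (Fin p)) :
    R (proj Mbarᗮ Δ) - R (proj Mbar Δ) - 2 * R (proj Mᗮ θ) ≤ R (θ + Δ) - R θ := by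
  have hsplit : proj M θ + proj Mbarᗮ Δ = (θ + Δ) - (proj Mᗮ θ + proj Mbar Δ) := by
    nth_rewrite 2 [← proj_add_proj_orthogonal M θ, ← proj_add_proj_orthogonal Mbar Δ]
    abel
  have hdec := hR _ (proj_mem M θ) _ (proj_mem Mbarᗮ Δ)
  have h₁ : R (proj M θ + proj Mbarᗮ Δ) ≤ R (θ + Δ) + (R (proj Mᗮ θ) + R (proj Mbar Δ)) :=
    hsplit ▸ (map_sub_le_add R _ _).trans (by gcongr; exact map_add_le_add R _ _)
  have h₂ : R θ ≤ R (proj M θ) + R (proj Mᗮ θ) := by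
    conv_lhs => rw [← proj_add_proj_orthogonal M θ]
    exact map_add_le_add R _ _
  linarith

theorem inner_le_dualNorm_mul (R : Seminorm ℝ (EuclideanSpace ℝ (Fin p)))
    (hR : ∀ u, R u = 0 → u = 0) (u v : EuclideanSpace ℝ (Fin p)) :
    ⟪u, v⟫ ≤ dualNorm R u * R v := by
  rcases eq_or_ne v 0 with rfl | hv
  · simp
  have hRv : 0 < R v := (apply_nonneg R v).lt_of_ne fun h => hv (hR v h.symm)
  have hunit : R ((R v)⁻¹ • v) ≤ 1 := by
    rw [map_smul_eq_mul, Real.norm_eq_abs, abs_inv, abs_of_pos hRv, inv_mul_cancel₀ hRv.ne']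
  have hle : ⟪u, (R v)⁻¹ • v⟫ ≤ dualNorm R u :=
    le_csSup (R.bddAbove_inner_image_le_one hR u) ⟨_, hunit, rfl⟩
  rwa [real_inner_smul_right, inv_mul_le_iff₀ hRv, mul_comm] at hle

theorem mem_cone_and_bregman_le (R : Seminorm ℝ (EuclideanSpace ℝ (Fin p)))
    (hR : ∀ u, R u = 0 → u = 0) {M Mbar : Submodule ℝ (EuclideanSpace ℝ (Fin p))}
    (hdec : IsDecomposable R M Mbar) {L : EuclideanSpace ℝ (Fin p) → ℝ}
    (hL : ConvexOn ℝ Set.univ L) {θstar θhat : EuclideanSpace ℝ (Fin p)}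
    (hdiff : DifferentiableAt ℝ L θstar) {lam : ℝ} (hlam : 0 < lam)
    (hmin : L θhat + lam * R θhat ≤ L θstar + lam * R θstar)
    (hA : 2 * dualNorm R (gradient L θstar) ≤ lam) :
    R (proj Mbarᗮ (θhat - θstar)) ≤
        3 * R (proj Mbar (θhat - θstar)) + 4 * R (proj Mᗮ θstar) ∧
      L θhat - L θstar - ⟪gradient L θstar, θhat - θstar⟫ ≤
        3 * lam / 2 * R (proj Mbar (θhat - θstar)) + 2 * lam * R (proj Mᗮ θstar) := by
  set Δ := θhat - θstar
  set g := gradient L θstar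
  have hconv : ⟪g, Δ⟫ ≤ L θhat - L θstar := by
    linarith [hL.add_inner_sub_le_of_hasGradientAt trivial trivial hdiff.hasGradientAt (y := θhat)]
  have hdual : -⟪g, Δ⟫ ≤ lam / 2 * R Δ :=
    calc -⟪g, Δ⟫ = ⟪g, -Δ⟫ := (inner_neg_right g Δ).symm
      _ ≤ dualNorm R g * R (-Δ) := inner_le_dualNorm_mul R hR g (-Δ)
      _ ≤ lam / 2 * R Δ := by
        rw [map_neg_eq_map]
        exact mul_le_mul_of_nonneg_right (by linarith) (apply_nonneg R Δ)
  have htri : R Δ ≤ R (proj Mbar Δ) + R (proj Mbarᗮ Δ) := by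
    conv_lhs => rw [← proj_add_proj_orthogonal Mbar Δ]
    exact map_add_le_add R _ _
  have hgap := hdec.sub_le_seminorm_add_sub R θstar Δ
  rw [add_sub_cancel] at hgap
  have hgap' := mul_le_mul_of_nonneg_left hgap hlam.le
  have htri' := mul_le_mul_of_nonneg_left htri (half_pos hlam).le
  have hB := mul_nonneg hlam.le (apply_nonneg R (proj Mbarᗮ Δ))
  refine ⟨?_, by linarith⟩
  have hcone : lam * (R (proj Mbarᗮ Δ) - 3 * R (proj Mbar Δ) - 4 * R (proj Mᗮ θstar)) ≤ 0 := by
    linarith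
  linarith [nonpos_of_mul_nonpos_right hcone hlam]

end Regularizer

theorem oracle_inequality_general
    {p : ℕ} (M Mbar : Submodule ℝ (EuclideanSpace ℝ (Fin p)))
    -- R is a norm:
    (R : EuclideanSpace ℝ (Fin p) → ℝ)
    (hR_tri : ∀ u v, R (u + v) ≤ R u + R v)
    (hR_smul : ∀ (c : ℝ) (u), R (c • u) = |c| * R u)
    (hR_def : ∀ u, R u = 0 ↔ u = 0)
    -- R is decomposable w.r.t. (M, M̄⊥):
    (hR_dec : ∀ θ ∈ M, ∀ γ ∈ Mbarᗮ, R (θ + γ) = R θ + R γ)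
    -- L is convex and differentiable:
    (L : EuclideanSpace ℝ (Fin p) → ℝ)
    (hL_conv : ConvexOn ℝ Set.univ L)
    (hL_diff : Differentiable ℝ L)
    (lam : ℝ) (hlam : 0 < lam)
    (φ α Z : ℝ) (hα : 0 < α)
    (θstar θhat : EuclideanSpace ℝ (Fin p))
    -- φ is the (finite) subspace compatibility constant of (‖·‖, R) on M̄:
    (hφ : IsLUB ((fun u => R u / ‖u‖) '' {u | u ∈ Mbar ∧ u ≠ 0}) φ)
    -- θ̂ minimizes the regularized loss:
    (hmin : ∀ θ : EuclideanSpace ℝ (Fin p), L θhat + lam * R θhat ≤ L θ + lam * R θ)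
    -- (i) λ ≥ 2 R*(∇L(θ*)):
    (hA : 2 * dualNorm R (gradient L θstar) ≤ lam)
    -- (ii) restricted strong convexity over the constraint set ℂ:
    (hE : ∀ θ : EuclideanSpace ℝ (Fin p),
      R (proj Mbarᗮ (θ - θstar)) ≤ 3 * R (proj Mbar (θ - θstar)) + 4 * R (proj Mᗮ θstar) →
      α * ‖θ - θstar‖ ^ 2 - Z ≤
        L θ - L θstar - ⟪gradient L θstar, θ - θstar⟫) :
    ‖θhat - θstar‖ ^ 2 ≤
      9 * (lam ^ 2 / α ^ 2) * φ ^ 2 + (1 / α) * (2 * Z + 4 * lam * R (proj Mᗮ θstar)) := by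
  let Rs : Seminorm ℝ (EuclideanSpace ℝ (Fin p)) :=
    Seminorm.of R hR_tri fun c u => by rw [Real.norm_eq_abs, hR_smul]
  obtain ⟨hcone, hbregman⟩ := mem_cone_and_bregman_le Rs (fun u => (hR_def u).1) hR_dec hL_conv
    (hL_diff θstar) hlam (hmin θstar) hA
  rw [show ⇑Rs = R from rfl] at hbregman
  have hrsc := hE θhat hcone
  set Δ := θhat - θstar
  have hcompat : R (proj Mbar Δ) ≤ φ * ‖Δ‖ :=
    (Rs.le_mul_norm_of_isLUB hφ (proj_mem Mbar Δ)).trans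
      (mul_le_mul_of_nonneg_left (norm_proj_le Mbar Δ) (Rs.nonneg_of_isLUB hφ))
  have hquad : α * ‖Δ‖ ^ 2 ≤ 3 * lam / 2 * φ * ‖Δ‖ + (2 * lam * R (proj Mᗮ θstar) + Z) := by
    linarith [mul_le_mul_of_nonneg_left hcompat (by positivity : (0 : ℝ) ≤ 3 * lam / 2)]
  calc ‖Δ‖ ^ 2
      ≤ (3 * lam / 2 * φ) ^ 2 / α ^ 2 + 2 * (2 * lam * R (proj Mᗮ θstar) + Z) / α :=
        sq_le_of_mul_sq_le_mul_add hα hquad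
    _ = 9 / 4 * (lam ^ 2 / α ^ 2) * φ ^ 2 + (1 / α) * (2 * Z + 4 * lam * R (proj Mᗮ θstar)) := by
      ring
    _ ≤ _ := by gcongr; norm_num

theorem oracle_inequality
    {p : ℕ} (M Mbar : Submodule ℝ (EuclideanSpace ℝ (Fin p))) (hMM : M ≤ Mbar)
    -- R is a norm:
    (R : EuclideanSpace ℝ (Fin p) → ℝ)
    (hR_tri : ∀ u v, R (u + v) ≤ R u + R v)
    (hR_smul : ∀ (c : ℝ) (u), R (c • u) = |c| * R u)
    (hR_def : ∀ u, R u = 0 ↔ u = 0)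
    -- R is decomposable w.r.t. (M, M̄⊥):
    (hR_dec : ∀ θ ∈ M, ∀ γ ∈ Mbarᗮ, R (θ + γ) = R θ + R γ)
    -- L is convex and differentiable:
    (L : EuclideanSpace ℝ (Fin p) → ℝ)
    (hL_conv : ConvexOn ℝ Set.univ L)
    (hL_diff : Differentiable ℝ L)
    (lam : ℝ) (hlam : 0 < lam)
    (φ α Z : ℝ) (hα : 0 < α) (hZ : 0 ≤ Z)
    (θstar θhat : EuclideanSpace ℝ (Fin p))
    -- φ is the (finite) subspace compatibility constant of (‖·‖, R) on M̄:
    (hφ : IsLUB ((fun u => R u / ‖u‖) '' {u | u ∈ Mbar ∧ u ≠ 0}) φ)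
    -- θ̂ minimizes the regularized loss:
    (hmin : ∀ θ : EuclideanSpace ℝ (Fin p), L θhat + lam * R θhat ≤ L θ + lam * R θ)
    -- (i) λ ≥ 2 R*(∇L(θ*)):
    (hA : 2 * dualNorm R (gradient L θstar) ≤ lam)
    -- (ii) restricted strong convexity over the constraint set ℂ:
    (hE : ∀ θ : EuclideanSpace ℝ (Fin p),
      R (proj Mbarᗮ (θ - θstar)) ≤ 3 * R (proj Mbar (θ - θstar)) + 4 * R (proj Mᗮ θstar) →
      α * ‖θ - θstar‖ ^ 2 - Z ≤
        L θ - L θstar - ⟪gradient L θstar, θ - θstar⟫) :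
    ‖θhat - θstar‖ ^ 2 ≤
      9 * (lam ^ 2 / α ^ 2) * φ ^ 2 + (1 / α) * (2 * Z + 4 * lam * R (proj Mᗮ θstar)) :=
  oracle_inequality_general M Mbar R hR_tri hR_smul hR_def hR_dec L hL_conv hL_diff lam hlam φ α Z
    hα θstar θhat hφ hmin hA hE
end
end

section
/- Let x_1,…,x_{T0} be i.i.d. random vectors in ℝ^d with ‖x_t‖₂ ≤ 1 almost surely and population Gram matrix Σ = E[x₁x₁ᵀ]. Let S ⊆ {1,…,d} with |S| = s ≥ 1 and α0 > 0, and assume the restricted eigenvalue condition βᵀΣβ ≥ α0‖β‖₂² for all β ∈ ℂ_S. Let C(s) = (√(α0/(64s) + 1) − 1)². Then for every T0 ≥ 2·log(d² + d)/C(s), with probability at least 1 − exp(−T0·C(s)/4), it holds simultaneously for all β ∈ ℂ_S that (1/(2T0))·Σ_{t=1}^{T0} ⟨x_t, β⟩² ≥ (α0/4)·‖β‖₂². -/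
/-!
With `Ĝ = ∑ₜ xₜxₜᵀ` the empirical Gram matrix, `∑ₜ ⟨xₜ, β⟩² = βᵀĜβ`. Each entry `Ĝᵢⱼ - T₀Σᵢⱼ`
is a sum of `T₀` independent centred variables with values in `[-1, 1]`, so by Hoeffding's
inequality and a union bound over the `d²` entries, all of them are below `T₀ε`, `ε = α0/(32s)`,
outside an event of probability `2d²exp(-T₀ε²/2) ≤ exp(-T₀C(s)/4)`. On the complement,
`βᵀĜβ ≥ T₀βᵀΣβ - T₀ε‖β‖₁²`, and on `ℂ_S` we have `‖β‖₁ ≤ 4‖β_S‖₁ ≤ 4√s‖β‖₂`, so the restricted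
eigenvalue condition leaves `βᵀĜβ ≥ T₀α0‖β‖₂²/2`.
-/

open MeasureTheory ProbabilityTheory
open scoped NNReal

section LassoCone

variable {ι : Type*} [Fintype ι] [DecidableEq ι]

def lassoCone (S : Finset ι) : Set (EuclideanSpace ℝ ι) :=
  {β | ∑ j ∈ Sᶜ, |β j| ≤ 3 * ∑ j ∈ S, |β j|}

theorem sq_sum_abs_le_of_mem_lassoCone {S : Finset ι} {β : EuclideanSpace ℝ ι}
    (hβ : β ∈ lassoCone S) : (∑ i, |β i|) ^ 2 ≤ 16 * S.card * ‖β‖ ^ 2 := by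
  have hl1 : ∑ i, |β i| ≤ 4 * ∑ j ∈ S, |β j| := by
    rw [← Finset.sum_add_sum_compl S]
    linarith [show ∑ j ∈ Sᶜ, |β j| ≤ 3 * ∑ j ∈ S, |β j| from hβ]
  have hS : (∑ j ∈ S, |β j|) ^ 2 ≤ S.card * ‖β‖ ^ 2 := calc
    _ ≤ S.card * ∑ j ∈ S, |β j| ^ 2 := sq_sum_le_card_mul_sum_sq
    _ ≤ S.card * ‖β‖ ^ 2 := by
      simp_rw [EuclideanSpace.real_norm_sq_eq, sq_abs]
      gcongr
      exact Finset.subset_univ S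
  calc (∑ i, |β i|) ^ 2 ≤ (4 * ∑ j ∈ S, |β j|) ^ 2 :=
        pow_le_pow_left₀ (Finset.sum_nonneg fun i _ => abs_nonneg (β i)) hl1 2
    _ ≤ 16 * S.card * ‖β‖ ^ 2 := by linarith

end LassoCone

section QuadraticForm

variable {ι : Type*} [Fintype ι]

theorem sum_sq_sum_mul_eq {τ : Type*} [Fintype τ] (x : τ → ι → ℝ) (β : ι → ℝ) :
    ∑ t, (∑ j, x t j * β j) ^ 2 = ∑ i, ∑ j, β i * (∑ t, x t i * x t j) * β j := by
  simp_rw [sq, Finset.sum_mul_sum, Finset.mul_sum, Finset.sum_mul]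
  rw [Finset.sum_comm]
  refine Finset.sum_congr rfl fun i _ => ?_
  rw [Finset.sum_comm]
  exact Finset.sum_congr rfl fun j _ => Finset.sum_congr rfl fun t _ => by ring

theorem quadForm_sub_le_of_abs_sub_le {A B : Matrix ι ι ℝ} {δ : ℝ}
    (h : ∀ i j, |A i j - B i j| ≤ δ) (β : ι → ℝ) :
    ∑ i, ∑ j, β i * B i j * β j - δ * (∑ i, |β i|) ^ 2 ≤ ∑ i, ∑ j, β i * A i j * β j := by
  have hdiff : ∑ i, ∑ j, β i * A i j * β j - ∑ i, ∑ j, β i * B i j * β j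
      = ∑ i, ∑ j, β i * (A i j - B i j) * β j := by
    simp only [← Finset.sum_sub_distrib, mul_sub, sub_mul]
  have hbound : |∑ i, ∑ j, β i * (A i j - B i j) * β j| ≤ δ * (∑ i, |β i|) ^ 2 := calc
    _ ≤ ∑ i, ∑ j, |β i * (A i j - B i j) * β j| :=
        (Finset.abs_sum_le_sum_abs _ _).trans
          (Finset.sum_le_sum fun i _ => Finset.abs_sum_le_sum_abs _ _)
    _ ≤ ∑ i, ∑ j, |β i| * δ * |β j| := by
        gcongr with i _ j _
        rw [abs_mul, abs_mul]
        gcongr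
        exact h i j
    _ = δ * (∑ i, |β i|) ^ 2 := by
        rw [sq, Finset.sum_mul_sum, Finset.mul_sum]
        exact Finset.sum_congr rfl fun i _ => by
          rw [Finset.mul_sum]; exact Finset.sum_congr rfl fun j _ => by ring
  linarith [neg_abs_le (∑ i, ∑ j, β i * (A i j - B i j) * β j)]

end QuadraticForm

section RestrictedStrongConvexity

variable {ι : Type*} [Fintype ι] [DecidableEq ι]

-- With `ε = α/(32|S|)`, the loss `nε‖β‖₁² ≤ 16|S|nε‖β‖₂²` on the cone is half of `nα‖β‖₂²`.
theorem rsc_of_abs_sum_sub_le {n : ℕ} (hn : 0 < n) (x : Fin n → EuclideanSpace ℝ ι)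
    (Sig : Matrix ι ι ℝ) {S : Finset ι} (hS : 0 < S.card) {α : ℝ} (hα : 0 ≤ α)
    {β : EuclideanSpace ℝ ι} (hβ : β ∈ lassoCone S)
    (hRE : α * ‖β‖ ^ 2 ≤ ∑ i, ∑ j, β i * Sig i j * β j)
    (hclose : ∀ i j, |∑ t, (x t i * x t j - Sig i j)| ≤ n * (α / (32 * S.card))) :
    α / 4 * ‖β‖ ^ 2 ≤ 1 / (2 * n) * ∑ t, (∑ j, x t j * β j) ^ 2 := by
  have hn' : (0 : ℝ) < n := Nat.cast_pos.2 hn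
  have hS' : (0 : ℝ) < S.card := Nat.cast_pos.2 hS
  have hdev := quadForm_sub_le_of_abs_sub_le (A := fun i j => ∑ t, x t i * x t j)
    (B := fun i j => n * Sig i j) (fun i j => by
      simpa [Finset.sum_sub_distrib] using hclose i j) β
  have hscale : ∑ i, ∑ j, β i * (n * Sig i j) * β j = n * ∑ i, ∑ j, β i * Sig i j * β j := by
    simp_rw [Finset.mul_sum]
    exact Finset.sum_congr rfl fun i _ => Finset.sum_congr rfl fun j _ => by ring
  have hl1 := mul_le_mul_of_nonneg_left (sq_sum_abs_le_of_mem_lassoCone hβ)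
    (by positivity : (0 : ℝ) ≤ n * (α / (32 * S.card)))
  have hloss : n * (α / (32 * S.card)) * (16 * S.card * ‖β‖ ^ 2) = n * (α / 2) * ‖β‖ ^ 2 := by
    field_simp; ring
  have hQ : n * (α / 2) * ‖β‖ ^ 2 ≤ ∑ t, (∑ j, x t j * β j) ^ 2 := by
    rw [sum_sq_sum_mul_eq (fun t i => x t i)]
    simp only [hscale] at hdev
    nlinarith [mul_le_mul_of_nonneg_left hRE hn'.le]
  calc α / 4 * ‖β‖ ^ 2 = 1 / (2 * n) * (n * (α / 2) * ‖β‖ ^ 2) := by field_simp; ring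
    _ ≤ 1 / (2 * n) * ∑ t, (∑ j, x t j * β j) ^ 2 := by gcongr

end RestrictedStrongConvexity

section Concentration

variable {Ω : Type*} [MeasurableSpace Ω] {μ : Measure Ω} {ι : Type*} [Fintype ι]

theorem measureReal_abs_sum_ge_le_of_iIndepFun [IsFiniteMeasure μ] {X : ι → Ω → ℝ}
    (h_indep : iIndepFun X μ) {c : ℝ≥0} (h_subG : ∀ i, HasSubgaussianMGF (X i) c μ) {ε : ℝ} (hε : 0 ≤ ε) :
    μ.real {ω | ε ≤ |∑ i, X i ω|} ≤ 2 * Real.exp (-ε ^ 2 / (2 * (Fintype.card ι * c))) := by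
  have hupper := HasSubgaussianMGF.measure_sum_ge_le_of_iIndepFun h_indep (c := fun _ => c)
    (s := Finset.univ) (fun i _ => h_subG i) hε
  have hlower := HasSubgaussianMGF.measure_sum_ge_le_of_iIndepFun (X := fun i ω => -X i ω)
    (h_indep.comp (fun _ => Neg.neg) fun _ => measurable_neg) (c := fun _ => c)
    (s := Finset.univ) (fun i _ => (h_subG i).neg) hε
  simp only [Finset.sum_const, Finset.card_univ, nsmul_eq_mul, NNReal.coe_mul,
    NNReal.coe_natCast, Finset.sum_neg_distrib] at hupper hlower
  have hsplit : {ω | ε ≤ |∑ i, X i ω|}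
      ⊆ {ω | ε ≤ ∑ i, X i ω} ∪ {ω | ε ≤ -∑ i, X i ω} := fun ω (hω : ε ≤ |∑ i, X i ω|) =>
    le_abs.1 hω
  calc μ.real {ω | ε ≤ |∑ i, X i ω|}
      ≤ μ.real {ω | ε ≤ ∑ i, X i ω} + μ.real {ω | ε ≤ -∑ i, X i ω} :=
        (measureReal_mono hsplit).trans (measureReal_union_le _ _)
    _ ≤ 2 * Real.exp (-ε ^ 2 / (2 * (Fintype.card ι * c))) := by linarith

theorem measureReal_abs_sum_sub_ge_le [IsProbabilityMeasure μ] {Y : ι → Ω → ℝ}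
    (hY : ∀ i, Measurable (Y i)) (h_indep : iIndepFun Y μ) {a b : ℝ}
    (hb : ∀ i, ∀ᵐ ω ∂μ, Y i ω ∈ Set.Icc a b) {m : ℝ} (hm : ∀ i, μ[Y i] = m)
    {ε : ℝ} (hε : 0 ≤ ε) :
    μ.real {ω | Fintype.card ι * ε ≤ |∑ i, (Y i ω - m)|}
      ≤ 2 * Real.exp (-(2 * Fintype.card ι * ε ^ 2) / (b - a) ^ 2) := by
  have h_subG : ∀ i, HasSubgaussianMGF (fun ω => Y i ω - m) ((‖b - a‖₊ / 2) ^ 2) μ :=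
    fun i => hm i ▸ hasSubgaussianMGF_of_mem_Icc (hY i).aemeasurable (hb i)
  refine (measureReal_abs_sum_ge_le_of_iIndepFun
    (h_indep.comp (fun _ y => y - m) fun _ => measurable_id.sub_const m) h_subG
    (by positivity)).trans_eq ?_
  congr 2
  rcases (Fintype.card ι).eq_zero_or_pos with hι | hι
  · simp [hι]
  · simp only [NNReal.coe_pow, NNReal.coe_div, coe_nnnorm, Real.norm_eq_abs, NNReal.coe_ofNat,
      div_pow, sq_abs]
    field_simp

theorem one_sub_sum_measureReal_le [IsProbabilityMeasure μ] {κ : Type*} [Fintype κ]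
    {s : Set Ω} (B : κ → Set Ω) (h : ∀ ω, (∀ k, ω ∉ B k) → ω ∈ s) :
    1 - ∑ k, μ.real (B k) ≤ μ.real s := by
  have hcover : Set.univ ⊆ s ∪ ⋃ k, B k := fun ω _ =>
    (em (∀ k, ω ∉ B k)).imp (h ω) fun hω => Set.mem_iUnion.2 (not_forall_not.1 hω)
  have := (measureReal_mono (μ := μ) hcover).trans (measureReal_union_le s (⋃ k, B k))
  rw [probReal_univ] at this
  linarith [measureReal_iUnion_fintype_le (μ := μ) B]

end Concentration

section EmpiricalGram

variable {Ω : Type*} [MeasurableSpace Ω] {μ : Measure Ω} [IsProbabilityMeasure μ]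
  {ι : Type*} [Fintype ι]

theorem mul_apply_mem_Icc_of_norm_le_one {v : EuclideanSpace ℝ ι} (hv : ‖v‖ ≤ 1) (i j : ι) :
    v i * v j ∈ Set.Icc (-1 : ℝ) 1 := by
  have hi : |v i| ≤ 1 := (PiLp.norm_apply_le v i).trans hv
  have hj : |v j| ≤ 1 := (PiLp.norm_apply_le v j).trans hv
  exact abs_le.1 (abs_mul (v i) (v j) ▸ mul_le_one₀ hi (abs_nonneg _) hj)

theorem measureReal_abs_sum_mul_apply_sub_ge_le {n : ℕ} {x : Fin n → Ω → EuclideanSpace ℝ ι}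
    (hx_meas : ∀ t, Measurable (x t)) (hx_indep : iIndepFun x μ)
    (hx_bound : ∀ t, ∀ᵐ ω ∂μ, ‖x t ω‖ ≤ 1) {Sig : Matrix ι ι ℝ}
    (hSig : ∀ t i j, ∫ ω, x t ω i * x t ω j ∂μ = Sig i j) (i j : ι) {ε : ℝ} (hε : 0 ≤ ε) :
    μ.real {ω | n * ε ≤ |∑ t, (x t ω i * x t ω j - Sig i j)|}
      ≤ 2 * Real.exp (-(n * ε ^ 2) / 2) := by
  have hentry : Measurable fun v : EuclideanSpace ℝ ι => v i * v j := by fun_prop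
  have h := measureReal_abs_sum_sub_ge_le (μ := μ) (Y := fun t ω => x t ω i * x t ω j)
    (fun t => hentry.comp (hx_meas t)) (hx_indep.comp (fun _ v => v i * v j) fun _ => hentry)
    (fun t => (hx_bound t).mono fun ω hω => mul_apply_mem_Icc_of_norm_le_one hω i j)
    (fun t => hSig t i j) hε
  simp only [Fintype.card_fin] at h
  refine h.trans_eq ?_
  congr 2
  ring

end EmpiricalGram

theorem sq_sqrt_add_one_sub_one_le {u : ℝ} (hu : 0 ≤ u) : (√(u + 1) - 1) ^ 2 ≤ (u / 2) ^ 2 := by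
  have hupper : √(u + 1) ≤ u / 2 + 1 :=
    Real.sqrt_le_iff.2 ⟨by positivity, by nlinarith⟩
  have hlower : 1 ≤ √(u + 1) := Real.one_le_sqrt.2 (by linarith)
  exact pow_le_pow_left₀ (by linarith) (by linarith) 2

theorem natCast_sq_mul_two_mul_exp_le (d : ℕ) {T C ε : ℝ} (hC : 0 < C) (hCε : C ≤ ε ^ 2 / 16)
    (hT : 2 * Real.log ((d : ℝ) ^ 2 + d) / C ≤ T) :
    (d : ℝ) ^ 2 * (2 * Real.exp (-(T * ε ^ 2) / 2)) ≤ Real.exp (-(T * C) / 4) := by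
  rcases d.eq_zero_or_pos with rfl | hd
  · simpa using (Real.exp_pos _).le
  have hd' : (1 : ℝ) ≤ d := Nat.one_le_cast.2 hd
  have hlog : Real.log ((d : ℝ) ^ 2 + d) ≤ T * C / 2 := by
    rw [div_le_iff₀ hC] at hT; linarith
  have hT0 : 0 ≤ T := by
    have := Real.log_nonneg (by nlinarith : (1 : ℝ) ≤ (d : ℝ) ^ 2 + d)
    nlinarith
  have hcount : 2 * (d : ℝ) ^ 2 ≤ Real.exp (T * C) := calc
    2 * (d : ℝ) ^ 2 ≤ ((d : ℝ) ^ 2 + d) ^ 2 := by nlinarith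
    _ ≤ Real.exp (T * C / 2) ^ 2 := by
        gcongr
        exact (Real.le_exp_log _).trans (Real.exp_le_exp.2 hlog)
    _ = Real.exp (T * C) := by rw [← Real.exp_nat_mul]; ring_nf
  calc (d : ℝ) ^ 2 * (2 * Real.exp (-(T * ε ^ 2) / 2))
      = 2 * (d : ℝ) ^ 2 * Real.exp (-(T * ε ^ 2) / 2) := by ring
    _ ≤ Real.exp (T * C) * Real.exp (-(8 * (T * C))) := by
        gcongr
        nlinarith [mul_le_mul_of_nonneg_left hCε hT0]
    _ ≤ Real.exp (-(T * C) / 4) := by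
        rw [← Real.exp_add]
        exact Real.exp_le_exp.2 (by nlinarith [mul_nonneg hT0 hC.le])

theorem lasso_rsc_condition_general
    {d : ℕ}
    {Ω : Type*} [MeasurableSpace Ω] (μ : Measure Ω) [IsProbabilityMeasure μ]
    (T0 : ℕ) (hT0 : 0 < T0)
    (x : Fin T0 → Ω → EuclideanSpace ℝ (Fin d))
    (hx_meas : ∀ t, Measurable (x t))
    -- i.i.d. contexts:
    (hx_indep : iIndepFun x μ)
    (hx_ident : ∀ s t, IdentDistrib (x s) (x t) μ μ)
    (hx_bound : ∀ t, ∀ᵐ ω ∂μ, ‖x t ω‖ ≤ 1)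
    -- the support S, |S| = s ≥ 1:
    (S : Finset (Fin d)) (s : ℕ) (hs : 1 ≤ s) (hcard : S.card = s)
    -- population Gram matrix:
    (Sig : Matrix (Fin d) (Fin d) ℝ)
    (hSig : ∀ i j, Sig i j = ∫ ω, x ⟨0, hT0⟩ ω i * x ⟨0, hT0⟩ ω j ∂μ)
    -- restricted eigenvalue condition on the cone ℂ_S:
    (α0 : ℝ) (hα0 : 0 < α0)
    (hRE : ∀ β : EuclideanSpace ℝ (Fin d),
      (∑ j ∈ Sᶜ, |β j|) ≤ 3 * ∑ j ∈ S, |β j| →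
      α0 * ‖β‖ ^ 2 ≤ ∑ i, ∑ j, β i * Sig i j * β j)
    -- T0 large enough:
    (hT0_big : 2 * Real.log ((d : ℝ) ^ 2 + d) /
      ((Real.sqrt (α0 / (64 * s) + 1) - 1) ^ 2) ≤ (T0 : ℝ)) :
    1 - Real.exp (-((T0 : ℝ) * (Real.sqrt (α0 / (64 * s) + 1) - 1) ^ 2) / 4) ≤
      (μ {ω | ∀ β : EuclideanSpace ℝ (Fin d),
        (∑ j ∈ Sᶜ, |β j|) ≤ 3 * ∑ j ∈ S, |β j| →
        (α0 / 4) * ‖β‖ ^ 2 ≤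
          (1 / (2 * (T0 : ℝ))) * ∑ t, (∑ j, x t ω j * β j) ^ 2}).toReal := by
  subst hcard
  set ε := α0 / (32 * S.card)
  set C := (Real.sqrt (α0 / (64 * S.card) + 1) - 1) ^ 2
  have hC : 0 < C := pow_pos (sub_pos.2 (Real.lt_sqrt zero_le_one |>.2 (by
    linarith [show 0 < α0 / (64 * S.card) by positivity]))) 2
  have hCε : C ≤ ε ^ 2 / 16 :=
    (sq_sqrt_add_one_sub_one_le (by positivity)).trans_eq (by ring)
  have hmean : ∀ t i j, ∫ ω, x t ω i * x t ω j ∂μ = Sig i j := fun t i j =>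
    (hSig i j).symm ▸ ((hx_ident t ⟨0, hT0⟩).comp
      (by fun_prop : Measurable fun v : EuclideanSpace ℝ (Fin d) => v i * v j)).integral_eq
  refine le_trans ?_ (one_sub_sum_measureReal_le (μ := μ)
    (fun p : Fin d × Fin d => {ω | T0 * ε ≤ |∑ t, (x t ω p.1 * x t ω p.2 - Sig p.1 p.2)|})
    fun ω hω β hβ => rsc_of_abs_sum_sub_le hT0 (fun t => x t ω) Sig hs hα0.le hβ (hRE β hβ)
      fun i j => (not_le.1 (hω (i, j))).le)
  have hε : 0 ≤ ε := by positivity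
  have hunion := Finset.sum_le_sum (s := Finset.univ) fun (p : Fin d × Fin d) _ =>
    measureReal_abs_sum_mul_apply_sub_ge_le hx_meas hx_indep hx_bound hmean p.1 p.2 hε
  rw [Finset.sum_const, Finset.card_univ, Fintype.card_prod, Fintype.card_fin, nsmul_eq_mul,
    Nat.cast_mul, ← sq] at hunion
  linarith [natCast_sq_mul_two_mul_exp_le d hC hCε hT0_big]

theorem lasso_rsc_condition
    {d : ℕ} (hd : 0 < d)
    {Ω : Type*} [MeasurableSpace Ω] (μ : Measure Ω) [IsProbabilityMeasure μ]
    (T0 : ℕ) (hT0 : 0 < T0)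
    (x : Fin T0 → Ω → EuclideanSpace ℝ (Fin d))
    (hx_meas : ∀ t, Measurable (x t))
    -- i.i.d. contexts:
    (hx_indep : iIndepFun x μ)
    (hx_ident : ∀ s t, IdentDistrib (x s) (x t) μ μ)
    (hx_bound : ∀ t, ∀ᵐ ω ∂μ, ‖x t ω‖ ≤ 1)
    -- the support S, |S| = s ≥ 1:
    (S : Finset (Fin d)) (s : ℕ) (hs : 1 ≤ s) (hcard : S.card = s)
    -- population Gram matrix:
    (Sig : Matrix (Fin d) (Fin d) ℝ)
    (hSig : ∀ i j, Sig i j = ∫ ω, x ⟨0, hT0⟩ ω i * x ⟨0, hT0⟩ ω j ∂μ)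
    -- restricted eigenvalue condition on the cone ℂ_S:
    (α0 : ℝ) (hα0 : 0 < α0)
    (hRE : ∀ β : EuclideanSpace ℝ (Fin d),
      (∑ j ∈ Sᶜ, |β j|) ≤ 3 * ∑ j ∈ S, |β j| →
      α0 * ‖β‖ ^ 2 ≤ ∑ i, ∑ j, β i * Sig i j * β j)
    -- T0 large enough:
    (hT0_big : 2 * Real.log ((d : ℝ) ^ 2 + d) /
      ((Real.sqrt (α0 / (64 * s) + 1) - 1) ^ 2) ≤ (T0 : ℝ)) :
    1 - Real.exp (-((T0 : ℝ) * (Real.sqrt (α0 / (64 * s) + 1) - 1) ^ 2) / 4) ≤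
      (μ {ω | ∀ β : EuclideanSpace ℝ (Fin d),
        (∑ j ∈ Sᶜ, |β j|) ≤ 3 * ∑ j ∈ S, |β j| →
        (α0 / 4) * ‖β‖ ^ 2 ≤
          (1 / (2 * (T0 : ℝ))) * ∑ t, (∑ j, x t ω j * β j) ^ 2}).toReal :=
  lasso_rsc_condition_general μ T0 hT0 x hx_meas hx_indep hx_ident hx_bound S s hs hcard Sig hSig α0
    hα0 hRE hT0_big
end

section
/- Let Σ₁, Σ₂ ∈ ℝ^{d×d}, let S ⊆ {1,…,d} with |S| = s ≥ 1, and let β ∈ ℂ_S. Suppose α > 0 and δ ≥ 0 satisfy 32sδ ≤ α, that βᵀΣ₁β ≥ α‖β‖₂², and that ‖Σ₂ − Σ₁‖_max ≤ δ. Then βᵀΣ₂β ≥ (α/2)·‖β‖₂². -/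
/-!
On the cone `ℂ_S`, Cauchy–Schwarz on `S` gives `‖β‖₁² ≤ 16 s ‖β‖₂²`, while an entrywise
perturbation of size `δ` moves the quadratic form by at most `δ ‖β‖₁² ≤ 16 s δ ‖β‖₂²`,
which `32 s δ ≤ α` keeps below `(α / 2) ‖β‖₂²`.
-/

open Finset

section ConeBounds

variable {ι : Type*} [Fintype ι]

theorem sq_sum_abs_le_card_mul_sum_sq (S : Finset ι) (β : ι → ℝ) :
    (∑ j ∈ S, |β j|) ^ 2 ≤ #S * ∑ j, β j ^ 2 :=
  calc (∑ j ∈ S, |β j|) ^ 2 ≤ #S * ∑ j ∈ S, |β j| ^ 2 := sq_sum_le_card_mul_sum_sq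
    _ = #S * ∑ j ∈ S, β j ^ 2 := by simp only [sq_abs]
    _ ≤ #S * ∑ j, β j ^ 2 := by
      gcongr
      exact subset_univ S

variable [DecidableEq ι]

theorem sum_abs_le_of_sum_compl_abs_le {S : Finset ι} {β : ι → ℝ} {c : ℝ}
    (hβ : ∑ j ∈ Sᶜ, |β j| ≤ c * ∑ j ∈ S, |β j|) :
    ∑ j, |β j| ≤ (1 + c) * ∑ j ∈ S, |β j| := by
  rw [← sum_add_sum_compl S]
  linarith

theorem sq_sum_abs_le_of_sum_compl_abs_le {S : Finset ι} {β : ι → ℝ} {c : ℝ}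
    (hβ : ∑ j ∈ Sᶜ, |β j| ≤ c * ∑ j ∈ S, |β j|) :
    (∑ j, |β j|) ^ 2 ≤ (1 + c) ^ 2 * #S * ∑ j, β j ^ 2 :=
  calc (∑ j, |β j|) ^ 2 ≤ ((1 + c) * ∑ j ∈ S, |β j|) ^ 2 :=
        pow_le_pow_left₀ (sum_nonneg fun _ _ => abs_nonneg _)
          (sum_abs_le_of_sum_compl_abs_le hβ) 2
    _ = (1 + c) ^ 2 * (∑ j ∈ S, |β j|) ^ 2 := by ring
    _ ≤ (1 + c) ^ 2 * (#S * ∑ j, β j ^ 2) := by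
        gcongr
        exact sq_sum_abs_le_card_mul_sum_sq S β
    _ = (1 + c) ^ 2 * #S * ∑ j, β j ^ 2 := by ring

end ConeBounds

section QuadraticForm

variable {ι : Type*} [Fintype ι]

theorem abs_quadForm_le_of_abs_le {E : Matrix ι ι ℝ} {δ : ℝ} (hE : ∀ i j, |E i j| ≤ δ)
    (β : ι → ℝ) : |∑ i, ∑ j, β i * E i j * β j| ≤ δ * (∑ j, |β j|) ^ 2 :=
  calc |∑ i, ∑ j, β i * E i j * β j| ≤ ∑ i, ∑ j, |β i * E i j * β j| :=
        (abs_sum_le_sum_abs _ _).trans <| sum_le_sum fun _ _ => abs_sum_le_sum_abs _ _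
    _ ≤ ∑ i, ∑ j, |β i| * δ * |β j| := by
        gcongr with i _ j _
        simp only [abs_mul]
        gcongr
        exact hE i j
    _ = δ * (∑ j, |β j|) ^ 2 := by
        rw [sq, sum_mul_sum, mul_sum]
        simp only [mul_sum]
        exact sum_congr rfl fun _ _ => sum_congr rfl fun _ _ => by ring

theorem quadForm_sub (A B : Matrix ι ι ℝ) (β : ι → ℝ) :
    ∑ i, ∑ j, β i * B i j * β j - ∑ i, ∑ j, β i * A i j * β j
      = ∑ i, ∑ j, β i * (B - A) i j * β j := by
  simp only [← sum_sub_distrib, Matrix.sub_apply, mul_sub, sub_mul]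

end QuadraticForm

theorem re_transfer_max_norm_general
    {d : ℕ} (s : ℕ) (S : Finset (Fin d)) (hcard : S.card = s)
    (Sig1 Sig2 : Matrix (Fin d) (Fin d) ℝ) (β : Fin d → ℝ)
    (hβ : ∑ j ∈ Sᶜ, |β j| ≤ 3 * ∑ j ∈ S, |β j|)
    (α δ : ℝ) (hδ : 0 ≤ δ) (h32 : 32 * s * δ ≤ α)
    (h1 : α * ∑ j, (β j) ^ 2 ≤ ∑ i, ∑ j, β i * Sig1 i j * β j)
    (hclose : ∀ i j, |Sig2 i j - Sig1 i j| ≤ δ) :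
    (α / 2) * ∑ j, (β j) ^ 2 ≤ ∑ i, ∑ j, β i * Sig2 i j * β j := by
  have hT : 0 ≤ ∑ j, β j ^ 2 := sum_nonneg fun _ _ => sq_nonneg _
  have hl1 : (∑ j, |β j|) ^ 2 ≤ 16 * s * ∑ j, β j ^ 2 := by
    have := sq_sum_abs_le_of_sum_compl_abs_le hβ
    rw [hcard] at this
    linarith
  have hpert : |∑ i, ∑ j, β i * Sig2 i j * β j - ∑ i, ∑ j, β i * Sig1 i j * β j|
      ≤ δ * (∑ j, |β j|) ^ 2 := by
    rw [quadForm_sub]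
    exact abs_quadForm_le_of_abs_le hclose β
  have hsmall : δ * (∑ j, |β j|) ^ 2 ≤ α / 2 * ∑ j, β j ^ 2 :=
    calc δ * (∑ j, |β j|) ^ 2 ≤ δ * (16 * s * ∑ j, β j ^ 2) := by gcongr
      _ = 16 * s * δ * ∑ j, β j ^ 2 := by ring
      _ ≤ α / 2 * ∑ j, β j ^ 2 := by gcongr; linarith
  linarith [(abs_le.mp hpert).1]

theorem re_transfer_max_norm
    {d : ℕ} (s : ℕ) (hs : 1 ≤ s) (S : Finset (Fin d)) (hcard : S.card = s)
    (Sig1 Sig2 : Matrix (Fin d) (Fin d) ℝ) (β : Fin d → ℝ)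
    (hβ : ∑ j ∈ Sᶜ, |β j| ≤ 3 * ∑ j ∈ S, |β j|)
    (α δ : ℝ) (hα : 0 < α) (hδ : 0 ≤ δ) (h32 : 32 * s * δ ≤ α)
    (h1 : α * ∑ j, (β j) ^ 2 ≤ ∑ i, ∑ j, β i * Sig1 i j * β j)
    (hclose : ∀ i j, |Sig2 i j - Sig1 i j| ≤ δ) :
    (α / 2) * ∑ j, (β j) ^ 2 ≤ ∑ i, ∑ j, β i * Sig2 i j * β j :=
  re_transfer_max_norm_general s S hcard Sig1 Sig2 β hβ α δ hδ h32 h1 hclose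
end
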